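/- Define ρ₁(5) = 0.913, ρ₁(6) = 0.952, ρ₁(7) = 0.99, and a(5) = a(6) = 0.1, a(7) = 3.75/49. For each n ∈ {5, 6, 7} and each ρ with 3·a(n)/π ≤ ρ ≤ ρ₁(n), one has I(circPerim0(ρπ/3), n, 0, ρ) > 0, i.e., √(4π·(ρπ/3) − (ρπ/3)²) + (5 − n)·p₅' − ρ·p₅ > 0. -/

import Mathlib

open Real

/-- Perimeter of a regular spherical `n`-gon of area `x` on the unit sphere. -/
noncomputable def regPerim (x n : ℝ) : ℝ :=
  n * Real.arccos ((Real.cos (2 * π / n) +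
      (Real.cos ((π - (2 * π - x) / n) / 2)) ^ 2) /
      (Real.sin ((π - (2 * π - x) / n) / 2)) ^ 2)

/-- Circumference of a circle on the unit sphere enclosing area `a`. -/
noncomputable def circPerim0 (a : ℝ) : ℝ := Real.sqrt (4 * π * a - a ^ 2)

/-- Perimeter of the regular spherical pentagon of area `π/3`. -/
noncomputable def p5 : ℝ := 5 * Real.arccos ((4 * Real.cos (2 * π / 5) + 1) / 3)

/-- Derivative at `n = 5` of `n ↦ regPerim (π/3) n`. -/
noncomputable def p5' : ℝ := deriv (fun n : ℝ => regPerim (π / 3) n) 5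

/-- `B' = -∂₁ regPerim (π/3, 5)`. -/
noncomputable def B' : ℝ := - deriv (fun x : ℝ => regPerim x 5) (π / 3)

/-- The isoperimetric functional `I(ℓ, n, t, ρ)`. -/
noncomputable def Ifun (ℓ n t ρ : ℝ) : ℝ := ℓ - t * B' + (5 - n) * p5' - ρ * p5

/-- The constant `ρ₁` of the proof (values specified only for `n = 5, 6, 7`). -/
noncomputable def rho1 : ℕ → ℝ
  | 5 => 0.913
  | 6 => 0.952
  | 7 => 0.99
  | _ => 1

/-- The constant `T₁` of the proof (values specified only for `n = 5, 6, 7`). -/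
noncomputable def T1 : ℕ → ℝ
  | 5 => 0.117
  | 6 => 0.065
  | 7 => 0.0134
  | _ => 0

/-- The constant `T₀` of the proof (values specified only for `n = 5, 6, 7`). -/
noncomputable def T0 : ℕ → ℝ
  | 5 => -0.1382
  | 6 => -0.0711
  | 7 => -0.01362
  | _ => 0

/-- The constant `ρ₂` of the proof (values specified only for `n = 5, 6, 7`). -/
noncomputable def rho2 : ℕ → ℝ
  | 5 => 0.913
  | 6 => 0.952
  | 7 => 0.99
  | _ => 1

/-- The upper bound `R(n)`: `0.9957` for `n = 5` and `1` otherwise. -/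
noncomputable def Rbd : ℕ → ℝ
  | 5 => 0.9957
  | _ => 1

/-- The area lower bound `a(n) = min (3.75 / n², 0.1)`. -/
noncomputable def aFn (n : ℕ) : ℝ := min (3.75 / (n : ℝ) ^ 2) 0.1

/-! Since `circPerim0 (ρπ/3) = (π/3)·√(ρ(12 - ρ))`, the bounds `p₅ ≤ 3.648665` and `p₅' ≤ -0.0776`
reduce the claim to `3(3.648665·ρ - 0.0776·(n - 5)) < π√(ρ(12 - ρ))`. Squared, this is positivity
of a concave quadratic in `ρ`, so it suffices to check it numerically at `ρ = 0.05 ≤ 3a(n)/π` and at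
`ρ = ρ₁(n)`.

The chain rule gives `p₅' = arccos(√5/3) - π(4 sin(2π/5)/5 - √3/6 - √15/18)`, and `p₅ = 5 arccos(√5/3)`;
the bound `arccos(√5/3) ≤ 0.729733` follows from the degree-8 alternating Taylor bound on `cos`. -/

open scoped Nat

noncomputable def regPerimCosArg (x n : ℝ) : ℝ :=
  (cos (2 * π / n) + cos ((π - (2 * π - x) / n) / 2) ^ 2) /
    sin ((π - (2 * π - x) / n) / 2) ^ 2

theorem regPerim_eq_mul_arccos (x n : ℝ) : regPerim x n = n * arccos (regPerimCosArg x n) :=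
  rfl

theorem Real.cos_two_pi_div_five : cos (2 * π / 5) = (√5 - 1) / 4 := by
  have h5 : √5 ^ 2 = 5 := Real.sq_sqrt (by norm_num)
  rw [show 2 * π / 5 = 2 * (π / 5) by ring, cos_two_mul, cos_pi_div_five]
  linear_combination h5 / 8

theorem regPerim_halfAngle_pi_div_three_five : (π - (2 * π - π / 3) / 5) / 2 = π / 3 := by ring

theorem hasDerivAt_regPerim_halfAngle (x : ℝ) {n : ℝ} (hn : n ≠ 0) :
    HasDerivAt (fun m : ℝ => (π - (2 * π - x) / m) / 2) ((2 * π - x) / (2 * n ^ 2)) n := by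
  have := (((hasDerivAt_inv hn).const_mul (2 * π - x)).const_sub π).div_const 2
  refine (this.congr_deriv ?_).congr_of_eventuallyEq (Filter.Eventually.of_forall fun m => ?_)
  · field_simp
  · simp [div_eq_mul_inv]

theorem hasDerivAt_cos_two_pi_div {n : ℝ} (hn : n ≠ 0) :
    HasDerivAt (fun m : ℝ => cos (2 * π / m)) (2 * π * sin (2 * π / n) / n ^ 2) n := by
  have := ((hasDerivAt_inv hn).const_mul (2 * π)).cos
  refine (this.congr_deriv ?_).congr_of_eventuallyEq (Filter.Eventually.of_forall fun m => ?_)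
  · field_simp
  · simp [div_eq_mul_inv]

theorem regPerimCosArg_pi_div_three_five : regPerimCosArg (π / 3) 5 = √5 / 3 := by
  rw [regPerimCosArg, regPerim_halfAngle_pi_div_three_five, cos_two_pi_div_five, cos_pi_div_three,
    sin_pi_div_three]
  field_simp
  norm_num
  ring

theorem hasDerivAt_regPerimCosArg_pi_div_three :
    HasDerivAt (regPerimCosArg (π / 3))
      (π * (8 * sin (2 * π / 5) / 75 - √3 / 45 - √5 * √3 / 135)) 5 := by
  have hβ := hasDerivAt_regPerim_halfAngle (π / 3) (n := 5) (by norm_num)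
  have hnum := (hasDerivAt_cos_two_pi_div (n := 5) (by norm_num)).add (hβ.cos.pow 2)
  have hden := hβ.sin.pow 2
  refine (hnum.div hden ?_).congr_deriv ?_
  · simp only [Pi.pow_apply, regPerim_halfAngle_pi_div_three_five, sin_pi_div_three]
    positivity
  · simp only [Pi.add_apply, Pi.pow_apply, regPerim_halfAngle_pi_div_three_five, cos_two_pi_div_five,
      cos_pi_div_three, sin_pi_div_three]
    norm_num [div_pow]
    field_simp
    ring

theorem sqrt_one_sub_sqrt_five_div_three_sq : √(1 - (√5 / 3) ^ 2) = 2 / 3 := by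
  rw [div_pow, Real.sq_sqrt (by norm_num), show (1 : ℝ) - 5 / 3 ^ 2 = (2 / 3) ^ 2 by norm_num]
  exact Real.sqrt_sq (by norm_num)

theorem hasDerivAt_regPerim_pi_div_three :
    HasDerivAt (regPerim (π / 3))
      (arccos (√5 / 3) - π * (4 * sin (2 * π / 5) / 5 - √3 / 6 - √5 * √3 / 18)) 5 := by
  have h5 : √5 < 3 := by
    rw [Real.sqrt_lt' (by norm_num)]; norm_num
  have harccos := Real.hasDerivAt_arccos (x := regPerimCosArg (π / 3) 5)
    (by rw [regPerimCosArg_pi_div_three_five]; linarith [Real.sqrt_nonneg 5])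
    (by rw [regPerimCosArg_pi_div_three_five]; linarith)
  have := (hasDerivAt_id (5 : ℝ)).mul (harccos.comp 5 hasDerivAt_regPerimCosArg_pi_div_three)
  rw [show regPerim (π / 3) = _ from funext (regPerim_eq_mul_arccos (π / 3))]
  refine this.congr_deriv ?_
  simp only [id, Function.comp_apply, regPerimCosArg_pi_div_three_five,
    sqrt_one_sub_sqrt_five_div_three_sq]
  ring

theorem p5'_eq : p5' = arccos (√5 / 3) - π * (4 * sin (2 * π / 5) / 5 - √3 / 6 - √5 * √3 / 18) :=
  hasDerivAt_regPerim_pi_div_three.deriv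

theorem p5_eq : p5 = 5 * arccos (√5 / 3) := by
  rw [p5, cos_two_pi_div_five]; ring_nf

theorem Real.cos_le_sum_range_of_sq_le_two {x : ℝ} (hx : x ^ 2 ≤ 2) (k : ℕ) :
    cos x ≤ ∑ i ∈ Finset.range (2 * k + 1), (-1) ^ i * ((x ^ 2) ^ i / (2 * i)!) := by
  have hanti : Antitone fun i : ℕ => (x ^ 2) ^ i / ((2 * i)! : ℝ) := by
    refine antitone_nat_of_succ_le fun i => ?_
    have hfac : ((2 * (i + 1))! : ℝ) = (2 * i + 2) * (2 * i + 1) * (2 * i)! := by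
      rw [show 2 * (i + 1) = 2 * i + 1 + 1 by ring, Nat.factorial_succ, Nat.factorial_succ]
      push_cast; ring
    rw [hfac, pow_succ, div_le_div_iff₀ (by positivity) (by positivity)]
    have hx' : x ^ 2 ≤ (2 * i + 2) * (2 * i + 1) := by nlinarith
    have := mul_le_mul_of_nonneg_left hx' (by positivity : (0:ℝ) ≤ (x ^ 2) ^ i * (2 * i)!)
    linarith
  refine hanti.tendsto_le_alternating_series ?_ k
  simpa only [pow_mul, mul_div_assoc] using (Real.hasSum_cos x).tendsto_sum_nat

theorem arccos_sqrt_five_div_three_le : arccos (√5 / 3) ≤ 0.729733 := by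
  have h5 : (2.236067 : ℝ) ≤ √5 := (Real.le_sqrt (by norm_num) (by norm_num)).mpr (by norm_num)
  have hcos : cos 0.729733 ≤ √5 / 3 := by
    refine (Real.cos_le_sum_range_of_sq_le_two (by norm_num) 2).trans ?_
    norm_num [Finset.sum_range_succ, Nat.factorial]
    linarith
  calc arccos (√5 / 3) ≤ arccos (cos 0.729733) := arccos_le_arccos hcos
    _ = 0.729733 := arccos_cos (by norm_num) (by linarith [pi_gt_three])

theorem sin_two_pi_div_five_ge : 0.951056 ≤ sin (2 * π / 5) := by
  have h5 : (2.236067 : ℝ) ≤ √5 := (Real.le_sqrt (by norm_num) (by norm_num)).mpr (by norm_num)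
  have hsq : sin (2 * π / 5) ^ 2 = (5 + √5) / 8 := by
    rw [sin_sq, cos_two_pi_div_five, div_pow, sub_sq, Real.sq_sqrt (by norm_num)]; ring
  have hnonneg : 0 ≤ sin (2 * π / 5) :=
    sin_nonneg_of_nonneg_of_le_pi (by positivity) (by linarith [pi_pos])
  nlinarith

theorem p5_le : p5 ≤ 3.648665 := by
  rw [p5_eq]; linarith [arccos_sqrt_five_div_three_le]

theorem p5'_le : p5' ≤ -0.0776 := by
  have h3 : √3 ≤ 1.7320509 := (Real.sqrt_le_left (by norm_num)).mpr (by norm_num)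
  have h5 : √5 ≤ 2.236068 := (Real.sqrt_le_left (by norm_num)).mpr (by norm_num)
  have h15 : √5 * √3 ≤ 2.236068 * 1.7320509 :=
    mul_le_mul h5 h3 (Real.sqrt_nonneg 3) (by norm_num)
  have hK : 0.257 ≤ 4 * sin (2 * π / 5) / 5 - √3 / 6 - √5 * √3 / 18 := by
    linarith [sin_two_pi_div_five_ge]
  have hπK : 3.141592 * 0.257 ≤ π * (4 * sin (2 * π / 5) / 5 - √3 / 6 - √5 * √3 / 18) :=
    mul_le_mul pi_gt_d6.le hK (by norm_num) pi_pos.le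
  rw [p5'_eq]; linarith [arccos_sqrt_five_div_three_le]

theorem quadratic_pos_of_endpoints {a b c lo hi x : ℝ} (ha : a ≤ 0)
    (hlo : 0 < a * lo ^ 2 + b * lo + c) (hhi : 0 < a * hi ^ 2 + b * hi + c)
    (h1 : lo ≤ x) (h2 : x ≤ hi) : 0 < a * x ^ 2 + b * x + c := by
  rcases h1.eq_or_lt with rfl | h1
  · exact hlo
  have hinterp : (hi - lo) * (a * x ^ 2 + b * x + c) = (hi - x) * (a * lo ^ 2 + b * lo + c)
      + (x - lo) * (a * hi ^ 2 + b * hi + c) - a * (x - lo) * (hi - x) * (hi - lo) := by ring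
  have : 0 < (hi - lo) * (a * x ^ 2 + b * x + c) := by
    rw [hinterp]
    have := mul_nonneg (mul_nonneg (mul_nonneg (neg_nonneg.2 ha) (sub_nonneg.2 h1.le))
      (sub_nonneg.2 h2)) (sub_nonneg.2 (h1.le.trans h2))
    nlinarith [mul_pos (sub_pos.2 h1) hhi, mul_nonneg (sub_nonneg.2 h2) hlo.le]
  exact pos_of_mul_pos_right this (by linarith)

theorem lt_circPerim0_of_sq_lt {u ρ π₀ : ℝ} (hπ₀ : 0 ≤ π₀) (hπ : π₀ ≤ π)
    (h : 9 * u ^ 2 < π₀ ^ 2 * (ρ * (12 - ρ))) : u < circPerim0 (ρ * π / 3) := by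
  refine Real.lt_sqrt_of_sq_lt ?_
  have hρ : 0 ≤ ρ * (12 - ρ) := by
    by_contra hneg
    nlinarith [sq_nonneg u, sq_nonneg π₀]
  have : π₀ ^ 2 * (ρ * (12 - ρ)) ≤ π ^ 2 * (ρ * (12 - ρ)) := by gcongr
  nlinarith

theorem mul_sub_lt_circPerim0 {π₀ P c lo hi ρ : ℝ} (hπ₀ : 0 ≤ π₀) (hπ : π₀ ≤ π)
    (hlo : 9 * (lo * P - c) ^ 2 < π₀ ^ 2 * (lo * (12 - lo)))
    (hhi : 9 * (hi * P - c) ^ 2 < π₀ ^ 2 * (hi * (12 - hi)))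
    (h1 : lo ≤ ρ) (h2 : ρ ≤ hi) : ρ * P - c < circPerim0 (ρ * π / 3) := by
  refine lt_circPerim0_of_sq_lt hπ₀ hπ ?_
  have := quadratic_pos_of_endpoints (a := -(π₀ ^ 2 + 9 * P ^ 2)) (b := 12 * π₀ ^ 2 + 18 * P * c)
    (c := -(9 * c ^ 2)) (neg_nonpos.2 (by positivity)) (by linarith) (by linarith) h1 h2
  linarith

theorem aFn_ge_of_le_seven {n : ℕ} (hn₀ : 1 ≤ n) (hn₇ : n ≤ 7) : 0.07 ≤ aFn n := by
  have hn : (1 : ℝ) ≤ n := by exact_mod_cast hn₀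
  have hn' : (n : ℝ) ≤ 7 := by exact_mod_cast hn₇
  refine le_min ((le_div_iff₀ (by positivity)).mpr ?_) (by norm_num)
  nlinarith

theorem sub_le_Ifun (ℓ : ℝ) {n ρ : ℝ} (hn : 5 ≤ n) (hρ : 0 ≤ ρ) :
    ℓ - (ρ * 3.648665 - (n - 5) * 0.0776) ≤ Ifun ℓ n 0 ρ := by
  have h1 := mul_le_mul_of_nonneg_left p5_le hρ
  have h2 := mul_le_mul_of_nonneg_left p5'_le (sub_nonneg.2 hn)
  rw [Ifun]; linarith

theorem case_rho_small_T_nonneg :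
    ∀ n ∈ ({5, 6, 7} : Set ℕ), ∀ ρ : ℝ,
      3 * aFn n / π ≤ ρ → ρ ≤ rho1 n →
        Ifun (circPerim0 (ρ * π / 3)) (n : ℝ) 0 ρ > 0 := by
  intro n hn ρ hρa hρ1
  have hn' : 5 ≤ n ∧ n ≤ 7 := by
    rcases hn with rfl | rfl | rfl <;> norm_num
  have hρ : 0.05 ≤ ρ := by
    refine le_trans ?_ hρa
    rw [le_div_iff₀ pi_pos]
    linarith [aFn_ge_of_le_seven (by omega) hn'.2, pi_lt_d2]
  refine lt_of_lt_of_le ?_ (sub_le_Ifun _ (by exact_mod_cast hn'.1) (by linarith))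
  rw [sub_pos]
  rcases hn with rfl | rfl | rfl <;> norm_num [rho1] at hρ1 <;>
    exact mul_sub_lt_circPerim0 (π₀ := 3.141592) (by norm_num) pi_gt_d6.le
      (by norm_num) (by norm_num) hρ hρ1
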